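/- arXiv:1609.01136 — 2 statements merged into one kernel-verified Lean document; each statement's English description precedes it below -/
import Mathlib

section
/- Let n, r, δ, μ, b be as follows: (r+δ-1) | n, ν' = n/(r+δ-1), 1 ≤ μ ≤ ν', gcd(b,n) = 1, and let i_1 < i_2 < ... < i_{δ-1} be an arithmetic progression of δ-1 residues modulo r+δ-1 with common difference b. For each m ∈ {i_1,...,i_{δ-1}} let L_m = {i mod n : i ≡ m (mod r+δ-1)}, and let D = {(j + s·b) mod n : s = 0,...,n - μ(r+δ-1) + δ - 2} where j ≡ i_1 (mod r+δ-1). Then |(⋃_m L_m) ∪ D| = n - k, where k = μ·r. -/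
open Finset

/-!
Parametrize `ZMod n` by `s ↦ j + s b` for `s < n`; this is a bijection because `b` is a unit
mod `n`. Since `j ≡ a` and `b` is also a unit mod `q = r + δ - 1`, the coset `L_{a + t b}`
corresponds to `s ≡ t (mod q)`, so the union of the cosets is `{s | s % q < δ - 1}`, while `D`
is `{s | s < (ν' - μ) q + δ - 1}`. Writing `s = q u + v`, the missing parameters are exactly those
with `u ≥ ν' - μ` and `v ≥ δ - 1`, a `μ × r` rectangle.
-/

section AffineParametrization

variable {n b : ℕ} (j : ℕ)

theorem injOn_natCast_add_mul (hb : IsUnit (b : ZMod n)) :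
    Set.InjOn (fun s : ℕ => ((j + s * b : ℕ) : ZMod n)) (Set.Iio n) := by
  intro s₁ h₁ s₂ h₂ h
  have h' : (s₁ : ZMod n) = s₂ := hb.mul_left_inj.1 (by simpa using h)
  rwa [ZMod.natCast_eq_natCast_iff', Nat.mod_eq_of_lt h₁, Nat.mod_eq_of_lt h₂] at h'

theorem exists_lt_natCast_add_mul_eq [NeZero n] (hb : IsUnit (b : ZMod n)) (x : ZMod n) :
    ∃ s < n, ((j + s * b : ℕ) : ZMod n) = x := by
  obtain ⟨u, hu⟩ := hb
  refine ⟨((x - j) * ↑u⁻¹).val, ZMod.val_lt _, ?_⟩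
  push_cast
  rw [ZMod.natCast_val, ZMod.cast_id, ← hu, mul_assoc, Units.inv_mul, mul_one]
  ring

theorem card_eq_card_filter_range_natCast_add_mul [NeZero n] (hb : IsUnit (b : ZMod n))
    (T : Finset (ZMod n)) :
    #T = #{s ∈ range n | ((j + s * b : ℕ) : ZMod n) ∈ T} := by
  symm
  refine card_bij (fun s _ => ((j + s * b : ℕ) : ZMod n)) (fun s hs => (mem_filter.1 hs).2)
    (fun s₁ h₁ s₂ h₂ h => injOn_natCast_add_mul j hb
      (mem_range.1 (mem_filter.1 h₁).1) (mem_range.1 (mem_filter.1 h₂).1) h) fun x hx => ?_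
  obtain ⟨s, hs, rfl⟩ := exists_lt_natCast_add_mul_eq j hb x
  exact ⟨s, mem_filter.2 ⟨mem_range.2 hs, hx⟩, rfl⟩

theorem natCast_add_mul_mem_image_range_iff (hb : IsUnit (b : ZMod n)) {s : ℕ} (hs : s < n)
    (N : ℕ) :
    ((j + s * b : ℕ) : ZMod n) ∈ (range N).image (fun t => ((j + t * b : ℕ) : ZMod n)) ↔
      s < N := by
  refine ⟨fun h => ?_, fun h => mem_image_of_mem _ (mem_range.2 h)⟩
  obtain ⟨t, ht, hts⟩ := mem_image.1 h
  by_contra! hNs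
  have htN : t < N := mem_range.1 ht
  have hts' : t = s := injOn_natCast_add_mul j hb (Set.mem_Iio.2 (by omega)) (Set.mem_Iio.2 hs) hts
  omega

end AffineParametrization

section Cosets

variable {n q a b j : ℕ} (hdvd : q ∣ n)

theorem castHom_natCast_add_mul_eq_iff (hbq : b.Coprime q)
    (hj : (j : ZMod q) = (a : ZMod q)) (s t : ℕ) :
    ZMod.castHom hdvd (ZMod q) ((j + s * b : ℕ) : ZMod n) = ((a + t * b : ℕ) : ZMod q) ↔
      s % q = t % q := by
  have hb : IsUnit (b : ZMod q) := (ZMod.isUnit_iff_coprime b q).2 hbq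
  rw [map_natCast, ← ZMod.natCast_eq_natCast_iff']
  push_cast
  rw [hj, add_right_inj, hb.mul_left_inj]

theorem natCast_add_mul_mem_biUnion_iff [NeZero n] (hbq : b.Coprime q)
    (hj : (j : ZMod q) = (a : ZMod q)) {c : ℕ} (hc : c ≤ q) (s : ℕ) :
    ((j + s * b : ℕ) : ZMod n) ∈ (range c).biUnion (fun t =>
        univ.filter fun x : ZMod n => ZMod.castHom hdvd (ZMod q) x = ((a + t * b : ℕ) : ZMod q)) ↔
      s % q < c := by
  simp only [mem_biUnion, mem_range, mem_filter, mem_univ, true_and,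
    castHom_natCast_add_mul_eq_iff hdvd hbq hj]
  refine ⟨fun ⟨t, ht, hst⟩ => ?_, fun h => ⟨s % q, h, (Nat.mod_mod _ _).symm⟩⟩
  rwa [hst, Nat.mod_eq_of_lt (by omega)]

end Cosets

section Counting

variable {q : ℕ} (ν m c : ℕ)

theorem card_filter_le_mod_and_mul_le (hq : 0 < q) :
    #{s ∈ range (ν * q) | c ≤ s % q ∧ m * q ≤ s} = (ν - m) * (q - c) := by
  rw [← Nat.card_Ico m ν, ← Nat.card_Ico c q, ← card_product]
  symm
  refine card_nbij' (fun p => q * p.1 + p.2) (fun s => (s / q, s % q)) ?_ ?_ ?_ ?_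
  · rintro ⟨u, v⟩ huv
    simp only [coe_product, Set.mem_prod, coe_Ico, Set.mem_Ico] at huv
    have hlt : q * u + q ≤ q * ν := by rw [← Nat.mul_succ]; exact Nat.mul_le_mul_left q huv.1.2
    have hle : m * q ≤ u * q := Nat.mul_le_mul_right q huv.1.1
    simp only [coe_filter, mem_range, Set.mem_ofPred_eq, Nat.mul_add_mod, Nat.mod_eq_of_lt huv.2.2]
    refine ⟨by rw [mul_comm ν]; omega, huv.2.1, by rw [mul_comm q]; omega⟩
  · intro s hs
    simp only [coe_filter, mem_range, Set.mem_ofPred_eq] at hs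
    simp only [coe_product, Set.mem_prod, coe_Ico, Set.mem_Ico]
    exact ⟨⟨(Nat.le_div_iff_mul_le hq).2 hs.2.2, (Nat.div_lt_iff_lt_mul hq).2 hs.1⟩,
      hs.2.1, Nat.mod_lt s hq⟩
  · rintro ⟨u, v⟩ huv
    simp only [coe_product, Set.mem_prod, coe_Ico, Set.mem_Ico] at huv
    simp [Nat.mul_add_div hq, Nat.mod_eq_of_lt huv.2.2, Nat.div_eq_of_lt huv.2.2]
  · intro s _
    exact Nat.div_add_mod s q

theorem card_filter_mod_lt_or_lt (hq : 0 < q) :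
    #{s ∈ range (ν * q) | s % q < c ∨ s < m * q + c} = ν * q - (ν - m) * (q - c) := by
  have hnot : ∀ s ∈ range (ν * q), ¬(s % q < c ∨ s < m * q + c) ↔ c ≤ s % q ∧ m * q ≤ s := by
    intro s _
    have hs := Nat.div_add_mod' s q
    constructor
    · intro h
      push Not at h
      exact ⟨h.1, by omega⟩
    · rintro ⟨h₁, h₂⟩
      have hmq : m * q ≤ s / q * q := Nat.mul_le_mul_right q ((Nat.le_div_iff_mul_le hq).2 h₂)
      omega
  have hsplit := card_filter_add_card_filter_not (s := range (ν * q))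
    (fun s => s % q < c ∨ s < m * q + c)
  rw [filter_congr hnot, card_filter_le_mod_and_mul_le ν m c hq, card_range] at hsplit
  omega

end Counting

theorem stmt7_general (n r δ μ b k : ℕ) [NeZero n] (hδ : 2 ≤ δ)
    (hdvd : (r + δ - 1) ∣ n) (hμ' : μ ≤ n / (r + δ - 1))
    (hb : Nat.Coprime b n) (hk : k = μ * r)
    (a j : ℕ) (hj : (j : ZMod (r + δ - 1)) = (a : ZMod (r + δ - 1))) :
    (((Finset.range (δ - 1)).biUnion fun t =>
        Finset.univ.filter fun x : ZMod n =>
          ZMod.castHom hdvd (ZMod (r + δ - 1)) x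
            = ((a + t * b : ℕ) : ZMod (r + δ - 1))) ∪
      (Finset.range (n - μ * (r + δ - 1) + δ - 1)).image
        (fun s => ((j + s * b : ℕ) : ZMod n))).card = n - k := by
  set q := r + δ - 1
  set ν := n / q
  have hn : ν * q = n := Nat.div_mul_cancel hdvd
  have hbn : IsUnit (b : ZMod n) := (ZMod.isUnit_iff_coprime b n).2 hb
  have hbq : b.Coprime q := hb.coprime_dvd_right hdvd
  have hD : n - μ * q + δ - 1 = (ν - μ) * q + (δ - 1) := by
    rw [Nat.sub_mul, hn]; omega
  rw [card_eq_card_filter_range_natCast_add_mul j hbn, hD,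
    filter_congr (q := fun s => s % q < δ - 1 ∨ s < (ν - μ) * q + (δ - 1)) fun s hs => by
      rw [mem_union, natCast_add_mul_mem_biUnion_iff hdvd hbq hj (by omega),
        natCast_add_mul_mem_image_range_iff j hbn (mem_range.1 hs)],
    ← hn, card_filter_mod_lt_or_lt ν (ν - μ) (δ - 1) (by omega), hn, Nat.sub_sub_self hμ', hk]
  congr 2
  omega

/-- With `(r+δ-1) ∣ n`, `ν' = n/(r+δ-1)`, `1 ≤ μ ≤ ν'`, `gcd(b,n)=1`, cosets
`L_m` for the arithmetic progression of residues `m = a, a+b, …, a+(δ-2)b`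
(mod `r+δ-1`), and `D = {j + s·b : s = 0,…,n-μ(r+δ-1)+δ-2}` with
`j ≡ a (mod r+δ-1)`, one has `|(⋃_m L_m) ∪ D| = n - k` where `k = μ·r`. -/
theorem stmt7 (n r δ μ b k : ℕ) [NeZero n] (hr : 0 < r) (hδ : 2 ≤ δ)
    (hdvd : (r + δ - 1) ∣ n) (hμ : 1 ≤ μ) (hμ' : μ ≤ n / (r + δ - 1))
    (hb : Nat.Coprime b n) (hk : k = μ * r)
    (a j : ℕ) (hj : (j : ZMod (r + δ - 1)) = (a : ZMod (r + δ - 1))) :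
    (((Finset.range (δ - 1)).biUnion fun t =>
        Finset.univ.filter fun x : ZMod n =>
          ZMod.castHom hdvd (ZMod (r + δ - 1)) x
            = ((a + t * b : ℕ) : ZMod (r + δ - 1))) ∪
      (Finset.range (n - μ * (r + δ - 1) + δ - 1)).image
        (fun s => ((j + s * b : ℕ) : ZMod n))).card = n - k :=
  stmt7_general n r δ μ b k hδ hdvd hμ' hb hk a j hj
end

section
/- Let n, k, r be positive integers with n odd, (r+1) | n, r | k, and μ = k/r odd with 1 ≤ μ ≤ n/(r+1). Let b be a positive integer with gcd(b,n)=1. Define subsets of Z/nZ: D = {0} ∪ {±(t·b) mod n : t = 1, ..., (n-k-μ)/2} and L = {i ∈ Z/nZ : i ≡ 0 (mod r+1)}. Then |D| = n - k - μ + 1, |L ∩ D| = n/(r+1) - μ + 1, and |L ∪ D| = n - k. -/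
/-!
Write `n = (r + 1) q`. Since `q` and `μ` are odd, `q = 2h + μ` and `(n - k - μ) / 2 = (r + 1) h =: s`,
so `D` is the image of the integer interval `[-s, s]` under `t ↦ t b`, which is injective since
`2s < n` and `b` is a unit. Moreover `t b ∈ L` iff `r + 1 ∣ t`, so `L ∩ D` corresponds to the
`2h + 1` multiples of `r + 1` in `[-s, s]`, while `|L| = q`; inclusion–exclusion gives `|L ∪ D|`.
-/

open Finset

namespace ZMod

theorem intCast_injOn_Icc {n : ℕ} {s : ℤ} (hs : 2 * s < n) :
    Set.InjOn (Int.cast : ℤ → ZMod n) (Set.Icc (-s) s) := by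
  intro t ht u hu htu
  have hdvd : (n : ℤ) ∣ u - t := (intCast_eq_intCast_iff_dvd_sub t u n).mp htu
  have := Int.eq_zero_of_abs_lt_dvd hdvd
    (abs_lt.mpr ⟨by linarith [ht.2, hu.1], by linarith [ht.1, hu.2]⟩)
  linarith

theorem intCast_mul_injOn_Icc {n b : ℕ} (hb : b.Coprime n) {s : ℤ} (hs : 2 * s < n) :
    Set.InjOn (fun t : ℤ => (t : ZMod n) * b) (Set.Icc (-s) s) :=
  ((isUnit_iff_coprime b n).mpr hb).mul_left_injective.comp_injOn (intCast_injOn_Icc hs)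

theorem castHom_intCast_mul_eq_zero_iff {m n b : ℕ} (hmn : m ∣ n) (hb : b.Coprime m) (t : ℤ) :
    castHom hmn (ZMod m) ((t : ZMod n) * b) = 0 ↔ (m : ℤ) ∣ t := by
  rw [map_mul, map_intCast, map_natCast, ((isUnit_iff_coprime b m).mpr hb).mul_left_eq_zero,
    intCast_zmod_eq_zero_iff_dvd]

theorem card_filter_castHom_eq_zero {m n : ℕ} [NeZero n] (hmn : m ∣ n) :
    #{x : ZMod n | castHom hmn (ZMod m) x = 0} = n / m := by
  set f := (castHom hmn (ZMod m)).toAddMonoidHom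
  have hker : #{x : ZMod n | castHom hmn (ZMod m) x = 0} = Nat.card f.ker := by
    rw [← Fintype.card_subtype, ← Nat.card_eq_fintype_card]; rfl
  have hm : m ≠ 0 := by rintro rfl; exact NeZero.ne n (Nat.eq_zero_of_zero_dvd hmn)
  have := f.ker.card_mul_index
  rw [AddSubgroup.index_ker, AddMonoidHom.range_eq_top.mpr (castHom_surjective hmn),
    AddSubgroup.card_top, Nat.card_zmod, Nat.card_zmod] at this
  rw [hker, Nat.div_eq_of_eq_mul_left (Nat.pos_of_ne_zero hm) this.symm]

end ZMod

theorem Int.card_filter_dvd_Icc_mul {m : ℕ} (hm : 0 < m) (h : ℕ) :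
    #{t ∈ Icc (-(m * h : ℤ)) (m * h) | (m : ℤ) ∣ t} = 2 * h + 1 := by
  have hm' : (0 : ℤ) < m := by exact_mod_cast hm
  have : {t ∈ Icc (-(m * h : ℤ)) (m * h) | (m : ℤ) ∣ t} =
      (Icc (-(h : ℤ)) h).map ⟨(· * (m : ℤ)), mul_left_injective₀ hm'.ne'⟩ := by
    ext t
    simp only [mem_filter, mem_Icc, mem_map, Function.Embedding.coeFn_mk,
      dvd_iff_exists_eq_mul_left]
    constructor
    · rintro ⟨⟨h1, h2⟩, j, rfl⟩
      exact ⟨j, ⟨by nlinarith, by nlinarith⟩, rfl⟩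
    · rintro ⟨j, ⟨h1, h2⟩, rfl⟩
      exact ⟨⟨by nlinarith, by nlinarith⟩, j, rfl⟩
  rw [this, card_map, Int.card_Icc]
  omega

theorem image_intCast_mul_Icc_neg_eq_union {R : Type*} [Ring R] [DecidableEq R] (b s : ℕ) :
    (Icc (-s : ℤ) s).image (fun t : ℤ => (t : R) * b) =
      {0} ∪ (Icc 1 s).image (fun t => ((t * b : ℕ) : R)) ∪
        (Icc 1 s).image (fun t => -((t * b : ℕ) : R)) := by
  ext x
  simp only [mem_union, mem_singleton, mem_image, mem_Icc]
  constructor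
  · rintro ⟨t, ⟨h1, h2⟩, rfl⟩
    obtain ⟨a, rfl | rfl⟩ := Int.eq_nat_or_neg t
    · rcases Nat.eq_zero_or_pos a with rfl | ha
      · simp
      · exact Or.inl (Or.inr ⟨a, ⟨ha, by omega⟩, by push_cast; rfl⟩)
    · rcases Nat.eq_zero_or_pos a with rfl | ha
      · simp
      · exact Or.inr ⟨a, ⟨ha, by omega⟩, by push_cast; exact (neg_mul _ _).symm⟩
  · rintro ((rfl | ⟨t, ⟨h1, h2⟩, rfl⟩) | ⟨t, ⟨h1, h2⟩, rfl⟩)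
    · exact ⟨0, by simp, by simp⟩
    · exact ⟨t, ⟨by omega, by omega⟩, by push_cast; rfl⟩
    · exact ⟨-t, ⟨by omega, by omega⟩, by push_cast; exact neg_mul _ _⟩

theorem stmt13_general (n k r μ b : ℕ) [NeZero n] (hodd : Odd n)
    (hdvd : (r + 1) ∣ n) (hk : k = μ * r) (hμo : Odd μ)
    (hμ2 : μ ≤ n / (r + 1)) (hb : Nat.Coprime b n) :
    ∀ D L : Finset (ZMod n),
      D = {(0 : ZMod n)} ∪
          ((Finset.Icc 1 ((n - k - μ) / 2)).image
            (fun t => ((t * b : ℕ) : ZMod n))) ∪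
          ((Finset.Icc 1 ((n - k - μ) / 2)).image
            (fun t => -((t * b : ℕ) : ZMod n))) →
      L = Finset.univ.filter
            (fun x : ZMod n => ZMod.castHom hdvd (ZMod (r + 1)) x = 0) →
      D.card = n - k - μ + 1 ∧
      (L ∩ D).card = n / (r + 1) - μ + 1 ∧
      (L ∪ D).card = n - k := by
  intro D L hD hL
  obtain ⟨q, hq⟩ := id hdvd
  have hnq : n / (r + 1) = q := by rw [hq, Nat.mul_div_cancel_left _ r.succ_pos]
  rw [hnq] at hμ2 ⊢
  obtain ⟨h, hh⟩ : Even (q - μ) := (Nat.odd_mul.mp (hq ▸ hodd)).2.tsub_odd hμo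
  obtain ⟨s, hs⟩ : ∃ s, s = (r + 1) * h := ⟨_, rfl⟩
  have hn : n = 2 * s + k + μ := by
    rw [hq, hs, hk, show q = h + h + μ by omega]; ring
  have hhalf : (n - k - μ) / 2 = s := by omega
  have hinj : Set.InjOn (fun t : ℤ => (t : ZMod n) * b) ↑(Icc (-s : ℤ) s) := by
    simpa using ZMod.intCast_mul_injOn_Icc hb (s := s) (by have := hμo.pos; omega)
  have hD' : D = (Icc (-s : ℤ) s).image fun t : ℤ => (t : ZMod n) * b := by
    rw [hD, hhalf, image_intCast_mul_Icc_neg_eq_union]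
  have hLD : L ∩ D = {t ∈ Icc (-s : ℤ) s | ((r + 1 : ℕ) : ℤ) ∣ t}.image
      fun t : ℤ => (t : ZMod n) * b := by
    rw [hL, filter_inter, univ_inter, hD', filter_image]
    simp only [ZMod.castHom_intCast_mul_eq_zero_iff hdvd (hb.coprime_dvd_right hdvd)]
  have hDcard : #D = 2 * s + 1 := by
    rw [hD', card_image_of_injOn hinj, Int.card_Icc]; omega
  have hLDcard : #(L ∩ D) = 2 * h + 1 := by
    rw [hLD, card_image_of_injOn (hinj.mono (coe_subset.mpr (filter_subset _ _))), hs]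
    exact_mod_cast Int.card_filter_dvd_Icc_mul r.succ_pos h
  have hLcard : #L = q := by rw [hL, ZMod.card_filter_castHom_eq_zero, hnq]
  have := card_union_add_card_inter L D
  omega

/-- For odd `n`, `(r+1) ∣ n`, `k = μr` with `μ` odd, `1 ≤ μ ≤ n/(r+1)`, and
`b > 0` with `gcd(b,n)=1`: the set `D = {0} ∪ {±t·b : t = 1,…,(n-k-μ)/2}` and
the coset `L = {i : i ≡ 0 (mod r+1)}` satisfy `|D| = n-k-μ+1`,
`|L ∩ D| = n/(r+1) - μ + 1`, and `|L ∪ D| = n-k`. -/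
theorem stmt13 (n k r μ b : ℕ) [NeZero n] (hodd : Odd n) (hr : 0 < r)
    (hdvd : (r + 1) ∣ n) (hk : k = μ * r) (hμo : Odd μ) (hμ1 : 1 ≤ μ)
    (hμ2 : μ ≤ n / (r + 1)) (hb0 : 0 < b) (hb : Nat.Coprime b n) :
    ∀ D L : Finset (ZMod n),
      D = {(0 : ZMod n)} ∪
          ((Finset.Icc 1 ((n - k - μ) / 2)).image
            (fun t => ((t * b : ℕ) : ZMod n))) ∪
          ((Finset.Icc 1 ((n - k - μ) / 2)).image
            (fun t => -((t * b : ℕ) : ZMod n))) →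
      L = Finset.univ.filter
            (fun x : ZMod n => ZMod.castHom hdvd (ZMod (r + 1)) x = 0) →
      D.card = n - k - μ + 1 ∧
      (L ∩ D).card = n / (r + 1) - μ + 1 ∧
      (L ∪ D).card = n - k :=
  stmt13_general n k r μ b hodd hdvd hk hμo hμ2 hb
end
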